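/- Characterization of optimal allocations (Lemma 1, Optimal strategy): Let n ≥ 1, let q : Fin n → ℝ satisfy q i > 0 for all i, and let P > 0. If p : Fin n → ℝ satisfies p i > 0 for all i and ∑ i, p i = P, then ⨆ i, q i / p i = (∑ i, q i) / P if and only if q i / p i = q j / p j for all i, j (equivalently, p i / q i = p j / q j for all i, j). Consequently, the minmax completion time over all such allocations is attained exactly at allocations equalizing the load across all nodes. -/

import Mathlib

/-!
With `M = ⨆ i, q i / p i` one has `q i ≤ M * p i` for every `i`; summing gives
`∑ q ≤ M * P`, with equality exactly when `q i = M * p i` for all `i`, i.e. when all the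
ratios `q i / p i` coincide. The ratios `p i / q i` are their inverses.
-/

open Finset

theorem eq_iSup_iff_forall_eq {ι α : Type*} [ConditionallyCompleteLattice α] (f : ι → α) :
    (∀ i, f i = ⨆ j, f j) ↔ ∀ i j, f i = f j := by
  refine ⟨fun h i j => (h i).trans (h j).symm, fun h i => ?_⟩
  have : Nonempty ι := ⟨i⟩
  simp only [← h i, ciSup_const]

theorem sum_eq_iSup_div_mul_sum_iff {ι : Type*} [Fintype ι] {p : ι → ℝ} (q : ι → ℝ)
    (hp : ∀ i, 0 < p i) :
    ∑ i, q i = (⨆ i, q i / p i) * ∑ i, p i ↔ ∀ i, q i / p i = ⨆ j, q j / p j := by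
  set M := ⨆ j, q j / p j
  have hle : ∀ i ∈ univ, q i ≤ M * p i := fun i _ =>
    (div_le_iff₀ (hp i)).mp (le_ciSup (Finite.bddAbove_range fun j => q j / p j) i)
  rw [mul_sum, sum_eq_sum_iff_of_le hle]
  simp only [mem_univ, true_implies, div_eq_iff (hp _).ne']

theorem minmax_characterization_general (n : ℕ) (q : Fin n → ℝ)
    (P : ℝ) (hP : 0 < P)
    (p : Fin n → ℝ) (hp : ∀ i, 0 < p i) (hpsum : ∑ i, p i = P) :
    ((⨆ i, q i / p i) = (∑ i, q i) / P ↔ ∀ i j, q i / p i = q j / p j) ∧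
    ((∀ i j, q i / p i = q j / p j) ↔ ∀ i j, p i / q i = p j / q j) := by
  constructor
  · rw [eq_div_iff hP.ne', ← hpsum, eq_comm, sum_eq_iSup_div_mul_sum_iff q hp,
      eq_iSup_iff_forall_eq]
  · simp only [← inv_div (q _), inv_inj]

theorem minmax_characterization (n : ℕ) (hn : 1 ≤ n) (q : Fin n → ℝ)
    (hq : ∀ i, 0 < q i) (P : ℝ) (hP : 0 < P)
    (p : Fin n → ℝ) (hp : ∀ i, 0 < p i) (hpsum : ∑ i, p i = P) :
    ((⨆ i, q i / p i) = (∑ i, q i) / P ↔ ∀ i j, q i / p i = q j / p j) ∧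
    ((∀ i j, q i / p i = q j / p j) ↔ ∀ i j, p i / q i = p j / q j) :=
  minmax_characterization_general n q P hP p hp hpsum
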